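/- Let b = 2^e·p where e ∈ {0,1,2,3} and p is an odd prime, and let a₁, a₂ be positive integers coprime to b. Then s(a₁,b) = s(a₂,b) if and only if a₁ ≡ a₂ (mod b) or a₁·a₂ ≡ 1 (mod b). -/

import Mathlib

/-!
Writing `q_k = ⌊ka/b⌋`, Dedekind's formula
`12ab·s(a,b) = (a²+1)(b-1)(2b-1) - 3ab(b-1) - 6b·Σ q_k²`, together with
`2·Σ q_k = (a-1)(b-1)` and `q² ≡ q (mod 2)`, determines `12ab·s(a,b)` modulo `12b`. Comparing
`a₂·12a₁b·s(a₁,b)` with `a₁·12a₂b·s(a₂,b)`, an equality `s(a₁,b) = s(a₂,b)` yields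
`(b-1)(a₁-a₂)((2b-1)(a₁a₂-1) - 3b) ≡ 0 (mod 12b)`.
Modulo `p` this says `p ∣ (a₁-a₂)(a₁a₂-1)`. Modulo `2^(e+2)`, where `b - 1` is a unit, the
second factor is `≡ -a₂(a₁-a₂) (mod 2^e)`, so if `2^e ∤ a₁-a₂` the left side has 2-adic
valuation `2·v₂(a₁-a₂) ≤ 2e-2 < e+2`, impossible for `e ≤ 3`. Hence `2^e ∣ a₁-a₂`, and also
`2^e ∣ a₁a₂-1` because odd squares are `1 mod 8`; the Chinese remainder theorem concludes.
-/

/-- The sawtooth function ((x)) = x - ⌊x⌋ - 1/2 for non-integer x, and 0 for integer x. -/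
def saw (x : ℚ) : ℚ := if x.den = 1 then 0 else x - ⌊x⌋ - 1/2

/-- The Dedekind sum s(a,b) = Σ_{k=1}^{b-1} ((k/b))((ka/b)). -/
def dedekindSum (a b : ℕ) : ℚ :=
  ∑ k ∈ Finset.range b, saw ((k : ℚ) / b) * saw ((k * a : ℚ) / b)

/-- I(a,b): the number of inversions of the permutation x ↦ ax mod b on {0,...,b-1}. -/
def inv' (a b : ℕ) : ℕ :=
  (((Finset.range b) ×ˢ (Finset.range b)).filter
    (fun p => p.1 < p.2 ∧ (a * p.2) % b < (a * p.1) % b)).card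

open Finset

lemma saw_add_intCast (x : ℚ) (n : ℤ) : saw (x + n) = saw x := by
  simp only [saw, Rat.add_intCast_den, Int.floor_add_intCast]
  split_ifs
  · rfl
  · push_cast; ring

lemma saw_natCast_mod_div (m : ℕ) {b : ℕ} (hb : b ≠ 0) :
    saw (((m % b : ℕ) : ℚ) / b) = saw ((m : ℚ) / b) := by
  have hdiv : (m : ℚ) / b = ((m % b : ℕ) : ℚ) / b + ((m / b : ℕ) : ℤ) := by
    rw [Int.cast_natCast]
    field_simp
    exact_mod_cast (Nat.mod_add_div m b).symm
  rw [hdiv, saw_add_intCast]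

lemma saw_natCast_div_eq_of_modEq {m n b : ℕ} (hb : b ≠ 0) (h : m ≡ n [MOD b]) :
    saw ((m : ℚ) / b) = saw ((n : ℚ) / b) := by
  rw [← saw_natCast_mod_div m hb, ← saw_natCast_mod_div n hb, h]

lemma saw_natCast_div_of_lt {r b : ℕ} (hr : 0 < r) (hrb : r < b) :
    saw ((r : ℚ) / b) = r / b - 1 / 2 := by
  have hb : (0 : ℚ) < b := by exact_mod_cast hr.trans hrb
  have hden : ((r : ℚ) / b).den ≠ 1 := by
    rw [Ne, Rat.den_div_natCast_eq_one_iff r b (by omega)]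
    exact Nat.not_dvd_of_pos_of_lt hr hrb
  have hfloor : ⌊(r : ℚ) / b⌋ = 0 :=
    Int.floor_eq_zero_iff.2 ⟨by positivity, (div_lt_one hb).2 (by exact_mod_cast hrb)⟩
  rw [saw, if_neg hden, hfloor, Int.cast_zero, sub_zero]

lemma sum_range_mul_mod {M : Type*} [AddCommMonoid M] (f : ℕ → M) {a b : ℕ}
    (h : a.Coprime b) :
    ∑ k ∈ range b, f (k * a % b) = ∑ k ∈ range b, f k := by
  have hinj : Set.InjOn (fun k => k * a % b) (range b) := fun k hk l hl hkl =>
    Nat.ModEq.eq_of_lt_of_lt (Nat.ModEq.cancel_right_of_coprime h.symm hkl)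
      (mem_range.1 hk) (mem_range.1 hl)
  have himage : (range b).image (fun k => k * a % b) = range b := by
    refine eq_of_subset_of_card_le (fun x hx => ?_) (card_image_of_injOn hinj).ge
    obtain ⟨k, hk, rfl⟩ := mem_image.1 hx
    exact mem_range.2 (Nat.mod_lt _ (Nat.zero_lt_of_lt (mem_range.1 hk)))
  rw [← sum_image hinj, himage]

lemma dedekindSum_eq_of_modEq {a₁ a₂ b : ℕ} (h : a₁ ≡ a₂ [MOD b]) :
    dedekindSum a₁ b = dedekindSum a₂ b := by
  rcases eq_or_ne b 0 with rfl | hb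
  · simp [dedekindSum]
  simp only [dedekindSum, ← Nat.cast_mul]
  exact sum_congr rfl fun k _ => congrArg _ (saw_natCast_div_eq_of_modEq hb (h.mul_left k))

lemma dedekindSum_eq_of_mul_modEq_one {a₁ a₂ b : ℕ} (h : a₁ * a₂ ≡ 1 [MOD b]) :
    dedekindSum a₁ b = dedekindSum a₂ b := by
  rcases eq_or_ne b 0 with rfl | hb
  · simp [dedekindSum]
  have hinv (k : ℕ) : k * a₁ % b * a₂ ≡ k [MOD b] :=
    calc k * a₁ % b * a₂ ≡ k * (a₁ * a₂) [MOD b] := by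
          simpa [mul_assoc] using (Nat.mod_modEq (k * a₁) b).mul_right a₂
      _ ≡ k * 1 [MOD b] := h.mul_left k
      _ = k := mul_one k
  simp only [dedekindSum, ← Nat.cast_mul]
  rw [← sum_range_mul_mod (fun k => saw ((k : ℚ) / b) * saw (((k * a₂ : ℕ) : ℚ) / b))
    (Nat.coprime_of_mul_modEq_one a₂ h)]
  refine sum_congr rfl fun k _ => ?_
  rw [mul_comm, saw_natCast_div_eq_of_modEq hb (hinv k), saw_natCast_mod_div _ hb]

lemma two_mul_sum_range_id (n : ℕ) : 2 * ∑ i ∈ range n, (i : ℤ) = n * (n - 1) := by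
  induction n with
  | zero => simp
  | succ n ih => rw [sum_range_succ, mul_add, ih]; push_cast; ring

lemma six_mul_sum_range_sq (n : ℕ) :
    6 * ∑ i ∈ range n, (i : ℤ) ^ 2 = n * (n - 1) * (2 * n - 1) := by
  induction n with
  | zero => simp
  | succ n ih => rw [sum_range_succ, mul_add, ih]; push_cast; ring

lemma natCast_mul_mod (k a b : ℕ) : ((k * a % b : ℕ) : ℤ) = k * a - b * (k * a / b : ℕ) := by
  rw [eq_sub_iff_add_eq]
  exact_mod_cast Nat.mod_add_div (k * a) b

section DedekindSumFormula

variable {a b : ℕ}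

lemma two_mul_sum_div (h : a.Coprime b) (hb : b ≠ 0) :
    2 * ∑ k ∈ range b, ((k * a / b : ℕ) : ℤ) = (a - 1) * (b - 1) := by
  have hsum := sum_range_mul_mod (fun m => ((m : ℕ) : ℤ)) h
  simp only [natCast_mul_mod, sum_sub_distrib, ← sum_mul, ← mul_sum] at hsum
  apply mul_left_cancel₀ (Nat.cast_ne_zero.2 hb : (b : ℤ) ≠ 0)
  linear_combination (-2) * hsum + ((a : ℤ) - 1) * two_mul_sum_range_id b

/-- Termwise, `k * a = b * q + r` gives `2akr = a²k² + r² - b²q²`; summing, `Σ r = Σ k` and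
`Σ r² = Σ k²` because `k ↦ k * a % b` permutes `range b`. -/
lemma three_mul_sum_mul_mod (h : a.Coprime b) :
    3 * a * ∑ k ∈ range b, (2 * (k : ℤ) - b) * (2 * (k * a % b : ℕ) - b)
      = ((a : ℤ) ^ 2 + 1) * b * (b - 1) * (2 * b - 1)
        - 6 * b ^ 2 * ∑ k ∈ range b, ((k * a / b : ℕ) : ℤ) ^ 2
        - 6 * a * b ^ 2 * (b - 1) + 3 * a * b ^ 3 := by
  have hterm (k : ℕ) : 3 * a * ((2 * (k : ℤ) - b) * (2 * (k * a % b : ℕ) - b))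
      = 6 * (a ^ 2 * k ^ 2 + ((k * a % b : ℕ) : ℤ) ^ 2 - b ^ 2 * ((k * a / b : ℕ) : ℤ) ^ 2)
        - 6 * a * b * (k + (k * a % b : ℕ)) + 3 * a * b ^ 2 := by
    linear_combination
      (6 * (b * ((k * a / b : ℕ) : ℤ) + k * a - (k * a % b : ℕ))) * natCast_mul_mod k a b
  have hsum := sum_range_mul_mod (fun m => ((m : ℕ) : ℤ)) h
  have hsum_sq := sum_range_mul_mod (fun m => ((m : ℕ) : ℤ) ^ 2) h
  rw [mul_sum, sum_congr rfl fun k _ => hterm k]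
  simp only [sum_add_distrib, sum_sub_distrib, ← mul_sum, sum_const, card_range, nsmul_eq_mul,
    hsum, hsum_sq]
  linear_combination ((a : ℤ) ^ 2 + 1) * six_mul_sum_range_sq b - 6 * a * b * two_mul_sum_range_id b

lemma four_mul_sq_mul_saw_mul_saw (h : a.Coprime b) {j : ℕ} (hj : 0 < j) (hjb : j < b) :
    4 * (b : ℚ) ^ 2 * (saw ((j : ℚ) / b) * saw ((j * a : ℚ) / b))
      = (((2 * (j : ℤ) - b) * (2 * (j * a % b : ℕ) - b) : ℤ) : ℚ) := by
  have hb : b ≠ 0 := by omega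
  have hr : 0 < j * a % b := Nat.pos_of_ne_zero fun h0 =>
    Nat.not_dvd_of_pos_of_lt hj hjb (h.symm.dvd_of_dvd_mul_right (Nat.dvd_of_mod_eq_zero h0))
  rw [← Nat.cast_mul, ← saw_natCast_mod_div (j * a) hb, saw_natCast_div_of_lt hj hjb,
    saw_natCast_div_of_lt hr (Nat.mod_lt _ (by omega))]
  simp only [Int.cast_mul, Int.cast_sub, Int.cast_ofNat, Int.cast_natCast]
  field_simp
  ring

lemma four_mul_sq_mul_dedekindSum (h : a.Coprime b) (hb : b ≠ 0) :
    4 * (b : ℚ) ^ 2 * dedekindSum a b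
      = ((∑ k ∈ range b, (2 * (k : ℤ) - b) * (2 * (k * a % b : ℕ) - b) : ℤ) : ℚ) - b ^ 2 := by
  obtain ⟨n, rfl⟩ := Nat.exists_eq_succ_of_ne_zero hb
  rw [dedekindSum, sum_range_succ', sum_range_succ', mul_add, mul_sum, Int.cast_add,
    sum_congr rfl fun k hk => four_mul_sq_mul_saw_mul_saw h k.succ_pos (by simpa using hk)]
  -- the `k = 0` term is `0` on the left but `b²` on the right
  have hsaw_zero : saw 0 = 0 := by simp [saw]
  simp only [Nat.cast_zero, zero_mul, zero_div, Nat.zero_mod, hsaw_zero, mul_zero, add_zero]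
  push_cast
  ring

lemma twelve_mul_dedekindSum (h : a.Coprime b) (hb : b ≠ 0) :
    12 * a * b * dedekindSum a b
      = ((((a : ℤ) ^ 2 + 1) * (b - 1) * (2 * b - 1) - 3 * a * b * (b - 1)
          - 6 * b * ∑ k ∈ range b, ((k * a / b : ℕ) : ℤ) ^ 2 : ℤ) : ℚ) := by
  have h3 := congrArg (Int.cast : ℤ → ℚ) (three_mul_sum_mul_mod h)
  have h4 := four_mul_sq_mul_dedekindSum h hb
  push_cast at h3 h4 ⊢
  apply mul_left_cancel₀ (Nat.cast_ne_zero.2 hb : (b : ℚ) ≠ 0)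
  linear_combination 3 * (a : ℚ) * h4 + h3

lemma exists_twelve_mul_dedekindSum_eq (h : a.Coprime b) (hb : b ≠ 0) :
    ∃ c : ℤ, 12 * a * b * dedekindSum a b
      = ((((b : ℤ) - 1) * ((a ^ 2 + 1) * (2 * b - 1) - 6 * a * b + 3 * b) + 12 * b * c : ℤ)
          : ℚ) := by
  obtain ⟨c, hc⟩ : 2 ∣ ∑ k ∈ range b, (((k * a / b : ℕ) : ℤ) ^ 2 - (k * a / b : ℕ)) :=
    dvd_sum fun k _ => by
      simpa [sq, mul_sub] using (Int.even_mul_pred_self ((k * a / b : ℕ) : ℤ)).two_dvd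
  rw [sum_sub_distrib] at hc
  refine ⟨-c, ?_⟩
  rw [twelve_mul_dedekindSum h hb]
  congr 1
  linear_combination (-6 * (b : ℤ)) * hc - 3 * b * two_mul_sum_div h hb

end DedekindSumFormula

lemma exists_mul_eq_of_dedekindSum_eq {a₁ a₂ b : ℕ} (h₁ : a₁.Coprime b) (h₂ : a₂.Coprime b)
    (hb : b ≠ 0) (h : dedekindSum a₁ b = dedekindSum a₂ b) :
    ∃ m : ℤ, ((b : ℤ) - 1) * (a₁ - a₂) * ((2 * b - 1) * (a₁ * a₂ - 1) - 3 * b) = 12 * b * m := by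
  obtain ⟨c₁, hc₁⟩ := exists_twelve_mul_dedekindSum_eq h₁ hb
  obtain ⟨c₂, hc₂⟩ := exists_twelve_mul_dedekindSum_eq h₂ hb
  have hcross : (a₂ : ℚ) * (12 * a₁ * b * dedekindSum a₁ b)
      = a₁ * (12 * a₂ * b * dedekindSum a₂ b) := by
    rw [h]; ring
  rw [hc₁, hc₂] at hcross
  have hcrossℤ :
      (a₂ : ℤ) * ((b - 1) * ((a₁ ^ 2 + 1) * (2 * b - 1) - 6 * a₁ * b + 3 * b) + 12 * b * c₁)
        = a₁ * ((b - 1) * ((a₂ ^ 2 + 1) * (2 * b - 1) - 6 * a₂ * b + 3 * b) + 12 * b * c₂) := by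
    exact_mod_cast hcross
  exact ⟨a₁ * c₂ - a₂ * c₁, by linear_combination hcrossℤ⟩

lemma dvd_sub_mul_mul_sub_one_of_eq {a₁ a₂ b m : ℤ}
    (h : (b - 1) * (a₁ - a₂) * ((2 * b - 1) * (a₁ * a₂ - 1) - 3 * b) = 12 * b * m) :
    b ∣ (a₁ - a₂) * (a₁ * a₂ - 1) :=
  ⟨12 * m - (a₁ - a₂) * ((2 * b - 3) * (a₁ * a₂ - 1) - 3 * b + 3), by linear_combination h⟩

lemma two_pow_dvd_of_two_pow_dvd_mul {x c k : ℤ} {e : ℕ} (he : e ≤ 3) (hc : Odd c)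
    (h : 2 ^ (e + 2) ∣ x * (c * x + 2 ^ e * k)) : 2 ^ e ∣ x := by
  suffices ∀ j ≤ e, 2 ^ j ∣ x from this e le_rfl
  intro j hj
  induction j with
  | zero => exact one_dvd x
  | succ j ih =>
    -- with `x = 2^j w` and `2j + 1 ≤ e + 2`, the hypothesis forces `2 ∣ w * (c * w + even)`
    obtain ⟨w, rfl⟩ := ih (by omega)
    obtain ⟨r, rfl⟩ : ∃ r, e = j + 1 + r := ⟨e - (j + 1), by omega⟩
    have h' : (2 : ℤ) ^ (2 * j) * 2 ∣ 2 ^ (2 * j) * (w * (c * w + 2 * 2 ^ r * k)) := by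
      rw [← pow_succ]
      exact (pow_dvd_pow 2 (by omega : 2 * j + 1 ≤ j + 1 + r + 2)).trans
        (h.trans (dvd_of_eq (by ring)))
    have hw : Even (w * (c * w + 2 * (2 ^ r * k))) := by
      rw [even_iff_two_dvd, ← mul_assoc 2]
      exact (mul_dvd_mul_iff_left (by positivity)).1 h'
    have hw_even : 2 ∣ w := by
      rw [← even_iff_two_dvd]
      by_contra hodd
      rw [Int.not_even_iff_odd] at hodd
      exact Int.not_even_iff_odd.2 (hodd.mul ((hc.mul hodd).add_even (even_two_mul _))) hw
    rw [pow_succ]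
    exact mul_dvd_mul_left _ hw_even

lemma two_pow_dvd_sub_and_mul_sub_one {a₁ a₂ u : ℤ} {e : ℕ} (he0 : e ≠ 0) (he : e ≤ 3)
    (h₂ : Odd a₂)
    (h : 2 ^ (e + 2) ∣ (2 ^ e * u - 1) * (a₁ - a₂) *
      ((2 * (2 ^ e * u) - 1) * (a₁ * a₂ - 1) - 3 * (2 ^ e * u))) :
    2 ^ e ∣ a₁ - a₂ ∧ 2 ^ e ∣ a₁ * a₂ - 1 := by
  have hsq : 2 ^ e ∣ a₂ ^ 2 - 1 :=
    (pow_dvd_pow 2 he).trans (by simpa using Int.eight_dvd_sq_sub_one_of_odd h₂)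
  have hodd : Odd (2 ^ e * u - 1) :=
    ((Int.even_pow.2 ⟨even_two, he0⟩).mul_right u).sub_odd odd_one
  have hcop : IsCoprime ((2 : ℤ) ^ (e + 2)) (2 ^ e * u - 1) :=
    (Int.isCoprime_two_left.2 hodd).pow_left
  obtain ⟨k, hk⟩ : 2 ^ e ∣ (2 * (2 ^ e * u) - 1) * (a₁ * a₂ - 1) - 3 * (2 ^ e * u)
      + a₂ * (a₁ - a₂) := by
    have : (2 * (2 ^ e * u) - 1) * (a₁ * a₂ - 1) - 3 * (2 ^ e * u) + a₂ * (a₁ - a₂)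
        = 2 ^ e * (2 * u * (a₁ * a₂ - 1) - 3 * u) - (a₂ ^ 2 - 1) := by ring
    rw [this]
    exact dvd_sub (dvd_mul_right _ _) hsq
  have hsub : 2 ^ e ∣ a₁ - a₂ := by
    refine two_pow_dvd_of_two_pow_dvd_mul he h₂.neg (k := k) ?_
    rw [mul_assoc] at h
    exact (hcop.dvd_of_dvd_mul_left h).trans (dvd_of_eq (by linear_combination (a₁ - a₂) * hk))
  refine ⟨hsub, ?_⟩
  rw [show a₁ * a₂ - 1 = a₂ * (a₁ - a₂) + (a₂ ^ 2 - 1) by ring]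
  exact dvd_add (dvd_mul_of_dvd_right hsub _) hsq

theorem dedekind_equal_iff_general (e p b a₁ a₂ : ℕ) (he : e ∈ ({0, 1, 2, 3} : Set ℕ))
    (hp : p.Prime) (hpodd : Odd p) (hb : b = 2 ^ e * p)
    (h₁ : Nat.Coprime a₁ b) (h₂ : Nat.Coprime a₂ b) :
    dedekindSum a₁ b = dedekindSum a₂ b ↔ (a₁ ≡ a₂ [MOD b] ∨ a₁ * a₂ ≡ 1 [MOD b]) := by
  refine ⟨fun h => ?_, fun h => h.elim dedekindSum_eq_of_modEq dedekindSum_eq_of_mul_modEq_one⟩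
  have he3 : e ≤ 3 := by simp only [Set.mem_insert_iff, Set.mem_singleton_iff] at he; omega
  have hbℤ : (b : ℤ) = 2 ^ e * p := by rw [hb]; push_cast; rfl
  have hb0 : b ≠ 0 := hb ▸ mul_ne_zero (by positivity) hp.ne_zero
  obtain ⟨m, hm⟩ := exists_mul_eq_of_dedekindSum_eq h₁ h₂ hb0 h
  have hmod_p : (p : ℤ) ∣ a₁ - a₂ ∨ (p : ℤ) ∣ a₁ * a₂ - 1 :=
    (Nat.prime_iff_prime_int.1 hp).dvd_or_dvd
      ((Dvd.intro_left _ hbℤ.symm).trans (dvd_sub_mul_mul_sub_one_of_eq hm))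
  have hmod_two_pow : (2 : ℤ) ^ e ∣ a₁ - a₂ ∧ (2 : ℤ) ^ e ∣ a₁ * a₂ - 1 := by
    rcases eq_or_ne e 0 with rfl | he0
    · simp
    have h2b : 2 ∣ b := hb ▸ (dvd_pow_self 2 he0).mul_right p
    refine two_pow_dvd_sub_and_mul_sub_one he0 he3 (u := p)
      (by exact_mod_cast (Nat.Coprime.coprime_dvd_right h2b h₂).odd_of_right) ?_
    rw [← hbℤ, hm, hbℤ]
    exact ⟨3 * p * m, by ring⟩
  have hcop : IsCoprime ((2 : ℤ) ^ e) p :=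
    (Int.isCoprime_two_left.2 (by exact_mod_cast hpodd)).pow_left
  simp only [Nat.modEq_iff_dvd, hbℤ, Nat.cast_mul, Nat.cast_one]
  rcases hmod_p with hp' | hp'
  · exact .inl (dvd_sub_comm.1 (hcop.mul_dvd hmod_two_pow.1 hp'))
  · exact .inr (dvd_sub_comm.1 (hcop.mul_dvd hmod_two_pow.2 hp'))

theorem dedekind_equal_iff (e p b a₁ a₂ : ℕ) (he : e ∈ ({0, 1, 2, 3} : Set ℕ))
    (hp : p.Prime) (hpodd : Odd p) (hb : b = 2 ^ e * p)
    (ha₁ : 0 < a₁) (ha₂ : 0 < a₂) (h₁ : Nat.Coprime a₁ b) (h₂ : Nat.Coprime a₂ b) :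
    dedekindSum a₁ b = dedekindSum a₂ b ↔ (a₁ ≡ a₂ [MOD b] ∨ a₁ * a₂ ≡ 1 [MOD b]) :=
  dedekind_equal_iff_general e p b a₁ a₂ he hp hpodd hb h₁ h₂
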